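/- Let G be an AG-group. Then for all a,b in G, Par(a, b, a⁻¹, (a*b)⁻¹*a) holds. -/
import Mathlib


class AGGroup (G : Type*) extends Mul G, Inv G where
  e : G
  left_id : ∀ a : G, e * a = a
  inv_mul : ∀ a : G, a⁻¹ * a = e
  mul_inv : ∀ a : G, a * a⁻¹ = e
  left_invertive : ∀ x y z : G, (x * y) * z = (z * y) * x

def AGPar {G : Type*} [AGGroup G] (a b c d : G) : Prop :=
  ∃ p q : G, p * a = q * b ∧ p * d = q * c

namespace AGGroup

variable {G : Type*} [AGGroup G]

lemma medial (a b c d : G) : (a * b) * (c * d) = (a * c) * (b * d) := by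
  rw [left_invertive, left_invertive c d b, left_invertive]

lemma inv_unique {c x : G} (h1 : x * c = e) : x = c⁻¹ := by
  calc x = e * x := (left_id x).symm
    _ = (c⁻¹ * c) * x := by rw [inv_mul]
    _ = (x * c) * c⁻¹ := by rw [left_invertive]
    _ = e * c⁻¹ := by rw [h1]
    _ = c⁻¹ := left_id _

lemma mul_inv_rev (a b : G) : (a * b)⁻¹ = a⁻¹ * b⁻¹ := by
  symm
  apply inv_unique
  rw [medial, inv_mul, inv_mul, left_id]

end AGGroup

theorem stmt17 {G : Type*} [AGGroup G] (a b : G) :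
    AGPar a b a⁻¹ ((a * b)⁻¹ * a) := by
  refine ⟨AGGroup.e, a * b⁻¹, ?_, ?_⟩
  · rw [AGGroup.left_id, AGGroup.left_invertive, AGGroup.mul_inv, AGGroup.left_id]
  · rw [AGGroup.left_id, AGGroup.mul_inv_rev, AGGroup.left_invertive a b⁻¹ a⁻¹,
      AGGroup.left_invertive a⁻¹ b⁻¹ a]
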